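/- For NGMRES with window size m = 0 applied to q(x) = (I − A)x + b, the update with the least-squares optimal coefficient β^{(k)} reduces to x_{k+1} = x_k − α_k r_k with α_k = (r_kᵀ A r_k)/(r_kᵀ Aᵀ A r_k), i.e., the optimal coefficient is β^{(k)} = (r_kᵀ A r_k)/(r_kᵀ Aᵀ A r_k) − 1; in particular NGMRES(0) coincides with the Minimal Residual (MR) iteration, and its first iterate x_1 = x_0 − (r_0ᵀ A r_0)/(r_0ᵀ Aᵀ A r_0) r_0 equals the first GMRES iterate. -/

import Mathlib

/-! NGMRES(0) writes `x_{k+1} = x_k - (1 + β) r_k`, and `x_0 + K_1 = x_0 + span {r_0}`, so both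
methods minimize `‖r(x - t r)‖² = ‖r - t A r‖²` over `t`. This quadratic has leading coefficient
`‖A r‖² > 0` and hence the unique minimizer `t = rᵀ A r / ‖A r‖²`, the MR step size. -/

open Matrix Filter

noncomputable section

/-- The residual `r(x) = A x - b` of the linear system `A x = b`. -/
def residv {n : ℕ} (A : Matrix (Fin n) (Fin n) ℝ) (b x : Fin n → ℝ) : Fin n → ℝ :=
  A.mulVec x - b

/-- The Euclidean 2-norm on `Fin n → ℝ`. -/
def norm2 {n : ℕ} (x : Fin n → ℝ) : ℝ := Real.sqrt (x ⬝ᵥ x)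

/-- The fixed-point map `q(x) = M x + b` with `M = I - A`. -/
def qmap {n : ℕ} (A : Matrix (Fin n) (Fin n) ℝ) (b x : Fin n → ℝ) : Fin n → ℝ :=
  (1 - A).mulVec x + b

/-- One NGMRES update from step `k`, with window `mk` and coefficients `β`:
`x_{k+1} = q(x_k) + ∑_{i=0}^{mk} β_i (q(x_k) - x_{k-i})`. -/
def ngmresUpdate {n : ℕ} (A : Matrix (Fin n) (Fin n) ℝ) (b : Fin n → ℝ)
    (x : ℕ → Fin n → ℝ) (β : ℕ → ℝ) (k mk : ℕ) : Fin n → ℝ :=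
  qmap A b (x k) + ∑ i ∈ Finset.range (mk + 1), β i • (qmap A b (x k) - x (k - i))

/-- The NGMRES iteration with window function `mk` (e.g. `mk k = min k m` for NGMRES(m),
`mk k = k` for full NGMRES): each step uses coefficients minimizing the 2-norm of the
next residual. -/
def IsNGMRES {n : ℕ} (A : Matrix (Fin n) (Fin n) ℝ) (b x0 : Fin n → ℝ) (mk : ℕ → ℕ)
    (x : ℕ → Fin n → ℝ) (β : ℕ → ℕ → ℝ) : Prop :=
  x 0 = x0 ∧ ∀ k, x (k + 1) = ngmresUpdate A b x (β k) k (mk k) ∧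
    ∀ β' : ℕ → ℝ, norm2 (residv A b (x (k + 1))) ≤
      norm2 (residv A b (ngmresUpdate A b x β' k (mk k)))

/-- The Krylov subspace `span {r0, A r0, …, A^{k-1} r0}`. -/
def krylov {n : ℕ} (A : Matrix (Fin n) (Fin n) ℝ) (r0 : Fin n → ℝ) (k : ℕ) :
    Submodule ℝ (Fin n → ℝ) :=
  Submodule.span ℝ {v | ∃ i < k, v = (A ^ i).mulVec r0}

/-- GMRES: `x_k` minimizes the residual 2-norm over the affine space `x0 + K_k`. -/
def IsGMRES {n : ℕ} (A : Matrix (Fin n) (Fin n) ℝ) (b x0 : Fin n → ℝ)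
    (x : ℕ → Fin n → ℝ) : Prop :=
  x 0 = x0 ∧ ∀ k, x k - x0 ∈ krylov A (residv A b x0) k ∧
    ∀ y : Fin n → ℝ, y - x0 ∈ krylov A (residv A b x0) k →
      norm2 (residv A b (x k)) ≤ norm2 (residv A b y)

/-- One Anderson acceleration update from step `k`, with window `mk`:
`x_{k+1} = q(x_k) + ∑_{i=1}^{mk} γ_i (q(x_k) - q(x_{k-i}))`. -/
def aaUpdate {n : ℕ} (A : Matrix (Fin n) (Fin n) ℝ) (b : Fin n → ℝ)
    (x : ℕ → Fin n → ℝ) (γ : ℕ → ℝ) (k mk : ℕ) : Fin n → ℝ :=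
  qmap A b (x k) + ∑ i ∈ Finset.Icc 1 mk, γ i • (qmap A b (x k) - qmap A b (x (k - i)))

/-- The Anderson acceleration least-squares objective
`r(x_k) + ∑_{i=1}^{mk} γ_i (r(x_k) - r(x_{k-i}))`. -/
def aaObj {n : ℕ} (A : Matrix (Fin n) (Fin n) ℝ) (b : Fin n → ℝ)
    (x : ℕ → Fin n → ℝ) (γ : ℕ → ℝ) (k mk : ℕ) : Fin n → ℝ :=
  residv A b (x k) + ∑ i ∈ Finset.Icc 1 mk, γ i • (residv A b (x k) - residv A b (x (k - i)))

/-- Anderson acceleration with window function `mk`. -/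
def IsAA {n : ℕ} (A : Matrix (Fin n) (Fin n) ℝ) (b x0 : Fin n → ℝ) (mk : ℕ → ℕ)
    (x : ℕ → Fin n → ℝ) (γ : ℕ → ℕ → ℝ) : Prop :=
  x 0 = x0 ∧ ∀ k, x (k + 1) = aaUpdate A b x (γ k) k (mk k) ∧
    ∀ γ' : ℕ → ℝ, norm2 (aaObj A b x (γ k) k (mk k)) ≤ norm2 (aaObj A b x γ' k (mk k))

/-- The spectral norm `‖A‖₂` (the ℓ²→ℓ² operator norm). -/
def specNorm {n : ℕ} (A : Matrix (Fin n) (Fin n) ℝ) : ℝ :=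
  ‖LinearMap.toContinuousLinearMap (Matrix.toEuclideanLin A)‖

/-- The spectral radius of a real matrix (computed over `ℂ`). -/
def specRad {n : ℕ} (M : Matrix (Fin n) (Fin n) ℝ) : ℝ :=
  (spectralRadius ℂ (M.map Complex.ofReal)).toReal

theorem dotProduct_self_nonneg {ι R : Type*} [Fintype ι] [Ring R] [LinearOrder R]
    [IsStrictOrderedRing R] (v : ι → R) : 0 ≤ v ⬝ᵥ v :=
  Finset.sum_nonneg fun i _ => mul_self_nonneg (v i)

theorem dotProduct_sub_smul_self_eq {ι K : Type*} [Fintype ι] [Field K] (u v : ι → K) (t : K)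
    (hv : v ⬝ᵥ v ≠ 0) :
    (u - t • v) ⬝ᵥ (u - t • v) =
      (u - (u ⬝ᵥ v / v ⬝ᵥ v) • v) ⬝ᵥ (u - (u ⬝ᵥ v / v ⬝ᵥ v) • v) +
        (t - u ⬝ᵥ v / v ⬝ᵥ v) ^ 2 * (v ⬝ᵥ v) := by
  simp only [sub_dotProduct, dotProduct_sub, smul_dotProduct, dotProduct_smul,
    dotProduct_comm v u, smul_eq_mul]
  field_simp
  ring

theorem eq_of_dotProduct_sub_smul_self_le {ι K : Type*} [Fintype ι] [Field K] [LinearOrder K]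
    [IsStrictOrderedRing K] {u v : ι → K} {t : K} (hv : v ≠ 0)
    (h : (u - t • v) ⬝ᵥ (u - t • v) ≤
      (u - (u ⬝ᵥ v / v ⬝ᵥ v) • v) ⬝ᵥ (u - (u ⬝ᵥ v / v ⬝ᵥ v) • v)) :
    t = u ⬝ᵥ v / v ⬝ᵥ v := by
  have hvv : 0 < v ⬝ᵥ v :=
    (dotProduct_self_nonneg v).lt_of_ne' (dotProduct_self_eq_zero.not.mpr hv)
  rw [dotProduct_sub_smul_self_eq u v t hvv.ne'] at h
  have hsq : (t - u ⬝ᵥ v / v ⬝ᵥ v) ^ 2 = 0 :=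
    le_antisymm (nonpos_of_mul_nonpos_left (by linarith) hvv) (sq_nonneg _)
  exact sub_eq_zero.mp (pow_eq_zero_iff two_ne_zero |>.mp hsq)

theorem norm2_le_norm2_iff {n : ℕ} {u v : Fin n → ℝ} : norm2 u ≤ norm2 v ↔ u ⬝ᵥ u ≤ v ⬝ᵥ v :=
  Real.sqrt_le_sqrt_iff (dotProduct_self_nonneg v)

theorem dotProduct_transpose_mul_mulVec_self {n : ℕ} (A : Matrix (Fin n) (Fin n) ℝ)
    (r : Fin n → ℝ) : r ⬝ᵥ (Aᵀ * A) *ᵥ r = A *ᵥ r ⬝ᵥ A *ᵥ r := by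
  rw [← mulVec_mulVec, dotProduct_mulVec, vecMul_transpose]

theorem residv_sub_smul {n : ℕ} (A : Matrix (Fin n) (Fin n) ℝ) (b y v : Fin n → ℝ) (t : ℝ) :
    residv A b (y - t • v) = residv A b y - t • A *ᵥ v := by
  simp only [residv, mulVec_sub, mulVec_smul]
  abel

/-- The Minimal Residual step size `α_k`, evaluated at `r = r_k`. -/
def mrCoeff {n : ℕ} (A : Matrix (Fin n) (Fin n) ℝ) (r : Fin n → ℝ) : ℝ :=
  (r ⬝ᵥ A *ᵥ r) / (r ⬝ᵥ (Aᵀ * A) *ᵥ r)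

theorem eq_mrCoeff_of_norm2_residv_le {n : ℕ} {A : Matrix (Fin n) (Fin n) ℝ} {b y : Fin n → ℝ}
    {t : ℝ} (hA : A *ᵥ residv A b y ≠ 0)
    (h : norm2 (residv A b (y - t • residv A b y)) ≤
      norm2 (residv A b (y - mrCoeff A (residv A b y) • residv A b y))) :
    t = mrCoeff A (residv A b y) := by
  rw [mrCoeff, dotProduct_transpose_mul_mulVec_self]
  rw [mrCoeff, dotProduct_transpose_mul_mulVec_self, residv_sub_smul, residv_sub_smul,
    norm2_le_norm2_iff] at h
  exact eq_of_dotProduct_sub_smul_self_le hA h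

theorem ngmresUpdate_zero {n : ℕ} (A : Matrix (Fin n) (Fin n) ℝ) (b : Fin n → ℝ)
    (x : ℕ → Fin n → ℝ) (β : ℕ → ℝ) (k : ℕ) :
    ngmresUpdate A b x β k 0 = x k - (1 + β 0) • residv A b (x k) := by
  rw [ngmresUpdate, qmap, residv, Finset.sum_range_one, sub_mulVec, one_mulVec, Nat.sub_zero]
  module

namespace IsNGMRES

variable {n : ℕ} {A : Matrix (Fin n) (Fin n) ℝ} {b x0 : Fin n → ℝ} {x : ℕ → Fin n → ℝ}
  {β : ℕ → ℕ → ℝ}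

theorem one_add_coeff_eq (hNG : IsNGMRES A b x0 (fun _ => 0) x β) {k : ℕ}
    (hA : A *ᵥ residv A b (x k) ≠ 0) : 1 + β k 0 = mrCoeff A (residv A b (x k)) := by
  obtain ⟨hupdate, hmin⟩ := hNG.2 k
  have hle := hmin fun _ => mrCoeff A (residv A b (x k)) - 1
  rw [hupdate, ngmresUpdate_zero, ngmresUpdate_zero, add_sub_cancel] at hle
  exact eq_mrCoeff_of_norm2_residv_le hA hle

theorem succ_eq (hNG : IsNGMRES A b x0 (fun _ => 0) x β) {k : ℕ}
    (hA : A *ᵥ residv A b (x k) ≠ 0) :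
    x (k + 1) = x k - mrCoeff A (residv A b (x k)) • residv A b (x k) := by
  rw [(hNG.2 k).1, ngmresUpdate_zero, hNG.one_add_coeff_eq hA]

end IsNGMRES

theorem krylov_one {n : ℕ} (A : Matrix (Fin n) (Fin n) ℝ) (r : Fin n → ℝ) :
    krylov A r 1 = ℝ ∙ r := by
  have : {v | ∃ i < 1, v = (A ^ i) *ᵥ r} = {r} := by
    ext v
    simp
  rw [krylov, this]

theorem IsGMRES.one_eq {n : ℕ} {A : Matrix (Fin n) (Fin n) ℝ} {b x0 : Fin n → ℝ}
    {xG : ℕ → Fin n → ℝ} (hG : IsGMRES A b x0 xG) (hA : A *ᵥ residv A b x0 ≠ 0) :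
    xG 1 = x0 - mrCoeff A (residv A b x0) • residv A b x0 := by
  obtain ⟨hmem, hmin⟩ := hG.2 1
  rw [krylov_one] at hmem hmin
  obtain ⟨c, hc⟩ := Submodule.mem_span_singleton.mp hmem
  have hxG : xG 1 = x0 - (-c) • residv A b x0 := by
    rw [neg_smul, sub_neg_eq_add, hc, add_sub_cancel]
  have hle := hmin (x0 - mrCoeff A (residv A b x0) • residv A b x0) <| by
    rw [sub_sub_cancel_left, ← neg_smul]
    exact Submodule.smul_mem _ _ (Submodule.mem_span_singleton_self _)
  rw [hxG] at hle ⊢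
  rw [eq_mrCoeff_of_norm2_residv_le hA hle]

/-- NGMRES(0) is the Minimal Residual iteration:
`x_{k+1} = x_k - α_k r_k` with `α_k = (r_kᵀ A r_k)/(r_kᵀ Aᵀ A r_k)`, the optimal
coefficient is `β^{(k)} = α_k - 1`, and the first iterate coincides with GMRES. -/
theorem stmt14 (n : ℕ) (A : Matrix (Fin n) (Fin n) ℝ) (b x0 : Fin n → ℝ)
    (x xG : ℕ → Fin n → ℝ) (β : ℕ → ℕ → ℝ)
    (hNG : IsNGMRES A b x0 (fun _ => 0) x β)
    (hG : IsGMRES A b x0 xG)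
    (hnz : ∀ k, residv A b (x k) ⬝ᵥ (Aᵀ * A).mulVec (residv A b (x k)) ≠ 0) :
    (∀ k, x (k + 1) = x k -
        ((residv A b (x k) ⬝ᵥ A.mulVec (residv A b (x k))) /
          (residv A b (x k) ⬝ᵥ (Aᵀ * A).mulVec (residv A b (x k)))) • residv A b (x k)) ∧
    (∀ k, β k 0 = (residv A b (x k) ⬝ᵥ A.mulVec (residv A b (x k))) /
          (residv A b (x k) ⬝ᵥ (Aᵀ * A).mulVec (residv A b (x k))) - 1) ∧
    x 1 = x0 - ((residv A b x0 ⬝ᵥ A.mulVec (residv A b x0)) /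
          (residv A b x0 ⬝ᵥ (Aᵀ * A).mulVec (residv A b x0))) • residv A b x0 ∧
    xG 1 = x 1 := by
  have hA : ∀ k, A *ᵥ residv A b (x k) ≠ 0 := fun k => by
    simpa [dotProduct_transpose_mul_mulVec_self] using hnz k
  have hx1 : x 1 = x0 - mrCoeff A (residv A b x0) • residv A b x0 :=
    hNG.1 ▸ hNG.succ_eq (hA 0)
  refine ⟨fun k => hNG.succ_eq (hA k), fun k => eq_sub_of_add_eq' (hNG.one_add_coeff_eq (hA k)),
    hx1, ?_⟩
  rw [hG.one_eq (hNG.1 ▸ hA 0), hx1]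

end
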